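/- arXiv:1411.4795 — 4 statements merged into one kernel-verified Lean document; each statement's English description precedes it below -/
import Mathlib

section
/- Every dissipative linear map on a Banach space is continuous. -/
/-!
If `u n → x` and `R (u n) → y`, put `v n = u n - x` and `w = y - R x`. Testing dissipativity
against a norming functional gives `‖z‖ ≤ ‖z - t • R z‖` for all `t ≥ 0`; applied to
`z = v n + t • w` and passed to the limit this yields `t ‖w‖ ≤ t ^ 2 ‖R w‖`, so `w = 0`.
Hence the graph of `R` is closed, and the closed graph theorem applies.
-/

open RCLike Filter Topology

namespace LinearMap

variable {𝕜 X : Type*} [RCLike 𝕜] [NormedAddCommGroup X] [NormedSpace 𝕜 X]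

def IsDissipative (R : X →ₗ[𝕜] X) : Prop :=
  ∀ (x : X) (φ : X →L[𝕜] 𝕜), ‖x‖ = 1 → ‖φ‖ = 1 → φ x = 1 → re (φ (R x)) ≤ 0

namespace IsDissipative

variable {R : X →ₗ[𝕜] X}

theorem re_apply_nonpos (hR : R.IsDissipative) {x : X} {φ : X →L[𝕜] 𝕜} (hφ : ‖φ‖ = 1)
    (hφx : φ x = ‖x‖) : re (φ (R x)) ≤ 0 := by
  rcases eq_or_ne x 0 with rfl | hx
  · simp
  have hxpos : 0 < ‖x‖ := norm_pos_iff.mpr hx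
  have hunit : ‖((‖x‖⁻¹ : ℝ) : 𝕜) • x‖ = 1 := by
    rw [norm_smul, norm_ofReal, abs_of_pos (inv_pos.mpr hxpos), inv_mul_cancel₀ hxpos.ne']
  have hφunit : φ (((‖x‖⁻¹ : ℝ) : 𝕜) • x) = 1 := by
    rw [map_smul, hφx, smul_eq_mul, ← ofReal_mul, inv_mul_cancel₀ hxpos.ne', ofReal_one]
  have h := hR _ φ hunit hφ hφunit
  rw [map_smul, map_smul, smul_eq_mul, re_ofReal_mul] at h
  exact nonpos_of_mul_nonpos_right h (inv_pos.mpr hxpos)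

theorem norm_le_norm_sub_smul (hR : R.IsDissipative) (x : X) {t : ℝ} (ht : 0 ≤ t) :
    ‖x‖ ≤ ‖x - (t : 𝕜) • R x‖ := by
  rcases eq_or_ne x 0 with rfl | hx
  · simp
  obtain ⟨φ, hφ, hφx⟩ := exists_dual_vector 𝕜 x (norm_ne_zero_iff.mpr hx)
  have hRx := hR.re_apply_nonpos hφ hφx
  calc ‖x‖ = re (φ (x - (t : 𝕜) • R x)) + t * re (φ (R x)) := by
        rw [map_sub, map_smul, smul_eq_mul, map_sub, re_ofReal_mul, hφx, ofReal_re]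
        ring
    _ ≤ re (φ (x - (t : 𝕜) • R x)) := by nlinarith
    _ ≤ ‖φ (x - (t : 𝕜) • R x)‖ := re_le_norm _
    _ ≤ ‖φ‖ * ‖x - (t : 𝕜) • R x‖ := φ.le_opNorm _
    _ = ‖x - (t : 𝕜) • R x‖ := by rw [hφ, one_mul]

theorem norm_le_norm_sub_smul_of_tendsto (hR : R.IsDissipative) {v : ℕ → X} {w : X}
    (hv : Tendsto v atTop (𝓝 0)) (hRv : Tendsto (fun n => R (v n)) atTop (𝓝 w))
    (x : X) {t : ℝ} (ht : 0 ≤ t) :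
    ‖x‖ ≤ ‖x - (t : 𝕜) • (w + R x)‖ := by
  have hlim : Tendsto (fun n => v n + x) atTop (𝓝 x) := by
    simpa using hv.add_const x
  refine le_of_tendsto_of_tendsto' hlim.norm
    (hlim.sub ((hRv.add_const (R x)).const_smul _)).norm fun n => ?_
  simpa only [map_add] using hR.norm_le_norm_sub_smul (v n + x) ht

theorem eq_zero_of_tendsto (hR : R.IsDissipative) {v : ℕ → X} {w : X}
    (hv : Tendsto v atTop (𝓝 0)) (hRv : Tendsto (fun n => R (v n)) atTop (𝓝 w)) :
    w = 0 := by
  have hbound : ∀ t : ℝ, 0 < t → ‖w‖ ≤ t * ‖R w‖ := by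
    intro t ht
    have h := hR.norm_le_norm_sub_smul_of_tendsto hv hRv ((t : 𝕜) • w) ht.le
    rw [map_smul, smul_add, sub_add_eq_sub_sub, sub_self, zero_sub, norm_neg, smul_smul,
      norm_smul, norm_smul, norm_mul, norm_ofReal, abs_of_pos ht, mul_assoc] at h
    exact le_of_mul_le_mul_left h ht
  have hlim : Tendsto (fun t : ℝ => t * ‖R w‖) (𝓝[>] 0) (𝓝 0) :=
    tendsto_nhdsWithin_of_tendsto_nhds <| by
      simpa using (tendsto_id (x := 𝓝 (0 : ℝ))).mul_const ‖R w‖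
  exact norm_le_zero_iff.mp <|
    ge_of_tendsto hlim (eventually_nhdsWithin_of_forall fun t ht => hbound t ht)

theorem continuous [CompleteSpace X] (hR : R.IsDissipative) : Continuous R := by
  refine R.continuous_of_seq_closed_graph fun u x y hu hRu => ?_
  refine sub_eq_zero.mp (hR.eq_zero_of_tendsto (v := fun n => u n - x) ?_ ?_)
  · simpa using hu.sub_const x
  · simpa only [map_sub, Function.comp_apply] using hRu.sub_const (R x)

end IsDissipative

end LinearMap

/-- Every dissipative linear map on a Banach space is continuous. -/
theorem dissipative_continuous {𝕜 X : Type*} [RCLike 𝕜] [NormedAddCommGroup X]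
    [NormedSpace 𝕜 X] [CompleteSpace X] (R : X →ₗ[𝕜] X)
    (hdiss : ∀ (x : X) (φ : X →L[𝕜] 𝕜), ‖x‖ = 1 → ‖φ‖ = 1 → φ x = 1 →
      RCLike.re (φ (R x)) ≤ 0) :
    Continuous R :=
  LinearMap.IsDissipative.continuous hdiss
end

section
/- If T : M → M is a weak*-local derivation on a von Neumann algebra M and p ∈ M is a projection, then T(p) = pT(p)(1−p) + (1−p)T(p)p. -/
open scoped ComplexOrder InnerProductSpace

variable {H : Type*} [NormedAddCommGroup H] [InnerProductSpace ℂ H] [CompleteSpace H]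

instance : SMulMemClass (VonNeumannAlgebra H) ℂ (H →L[ℂ] H) :=
  ⟨fun {s} c {x} hx => s.toStarSubalgebra.smul_mem hx c⟩

/-- A normal state on `B(H)`, given in density-matrix form `φ(x) = ∑ ⟨x ξₙ, ξₙ⟩` with
`∑ ‖ξₙ‖² = 1`.  The normal states of a von Neumann algebra `M ⊆ B(H)` are exactly the
restrictions to `M` of such functionals. -/
def IsNormalState (φ : (H →L[ℂ] H) → ℂ) : Prop :=
  ∃ ξ : ℕ → H, (∑' n, ‖ξ n‖ ^ 2) = 1 ∧ ∀ x : H →L[ℂ] H, φ x = ∑' n, ⟪ξ n, x (ξ n)⟫_ℂ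

/-- A derivation on the von Neumann algebra `M`. -/
def IsDerivationOn (M : VonNeumannAlgebra H) (D : ↥M → ↥M) : Prop :=
  IsLinearMap ℂ D ∧ ∀ a b : ↥M, D (a * b) = D a * b + a * D b

/-- A weak*-local derivation on the von Neumann algebra `M`: a linear map agreeing with some
derivation at each point, up to each normal state. -/
def IsWeakStarLocalDerivation (M : VonNeumannAlgebra H) (T : ↥M → ↥M) : Prop :=
  IsLinearMap ℂ T ∧ ∀ (a : ↥M) (φ : (H →L[ℂ] H) → ℂ), IsNormalState φ →
    ∃ D : ↥M → ↥M, IsDerivationOn M D ∧ φ ↑(T a) = φ ↑(D a)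

/-- The vector state attached to a unit vector is a normal state. -/
lemma isNormalState_vector (η : H) (hη : ‖η‖ = 1) :
    IsNormalState (fun x : H →L[ℂ] H => ⟪η, x η⟫_ℂ) := by
  refine ⟨fun n => if n = 0 then η else 0, ?_, ?_⟩
  · rw [tsum_eq_single 0 (by intro b hb; simp [hb])]
    simp [hη]
  · intro x
    rw [tsum_eq_single 0 (by intro b hb; simp [hb])]
    simp

/-- The key compression lemma: if `q` is a projection that kills `D p` under compression for
every derivation `D`, then it also kills `T p` under compression. -/
lemma compression_zero (M : VonNeumannAlgebra H) (T : ↥M → ↥M)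
    (hT : IsWeakStarLocalDerivation M T) (p q : ↥M) (hq1 : star q = q) (hq2 : q * q = q)
    (hD0 : ∀ D : ↥M → ↥M, IsDerivationOn M D → q * D p * q = 0) :
    q * T p * q = 0 := by
  have hqadj : ContinuousLinearMap.adjoint (q : H →L[ℂ] H) = (q : H →L[ℂ] H) := by
    rw [← ContinuousLinearMap.star_eq_adjoint]
    exact congrArg Subtype.val hq1
  have hmov : ∀ y x : H, ⟪(q : H →L[ℂ] H) y, x⟫_ℂ = ⟪y, (q : H →L[ℂ] H) x⟫_ℂ := by
    intro y x
    conv_lhs => rw [← hqadj]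
    exact ContinuousLinearMap.adjoint_inner_left _ _ _
  -- show the coerced operator is zero via the quadratic form
  have hz : ((q * T p * q : ↥M) : H →L[ℂ] H) = 0 := by
    have hform : ∀ ξ : H, ⟪((q * T p * q : ↥M) : H →L[ℂ] H) ξ, ξ⟫_ℂ = 0 := by
      intro ξ
      set η : H := (q : H →L[ℂ] H) ξ with hηdef
      have happ : ((q * T p * q : ↥M) : H →L[ℂ] H) ξ
          = (q : H →L[ℂ] H) (((T p : ↥M) : H →L[ℂ] H) η) := rfl
      have hmain : ⟪((T p : ↥M) : H →L[ℂ] H) η, η⟫_ℂ = 0 := by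
        by_cases hη0 : η = 0
        · simp [hη0]
        · set c : ℂ := (‖η‖ : ℂ)⁻¹ with hc
          set η' : H := c • η with hη'def
          have hnη : (‖η‖ : ℂ) ≠ 0 := by
            exact_mod_cast norm_ne_zero_iff.mpr hη0
          have hη' : ‖η'‖ = 1 := by
            rw [hη'def, norm_smul, hc]
            simp [norm_ne_zero_iff.mpr hη0]
          have hqη : (q : H →L[ℂ] H) η = η := by
            rw [hηdef]
            have : ((q * q : ↥M) : H →L[ℂ] H) ξ = (q : H →L[ℂ] H) ξ := by rw [hq2]
            exact this
          have hqη' : (q : H →L[ℂ] H) η' = η' := by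
            rw [hη'def, map_smul, hqη]
          obtain ⟨D, hD, hφ⟩ := hT.2 p _ (isNormalState_vector η' hη')
          have hDz : ((q * D p * q : ↥M) : H →L[ℂ] H) = 0 := by
            rw [hD0 D hD]; rfl
          have hDform : ⟪η', ((D p : ↥M) : H →L[ℂ] H) η'⟫_ℂ = 0 := by
            calc ⟪η', ((D p : ↥M) : H →L[ℂ] H) η'⟫_ℂ
                = ⟪(q : H →L[ℂ] H) η', ((D p : ↥M) : H →L[ℂ] H) ((q : H →L[ℂ] H) η')⟫_ℂ := by
                  rw [hqη']
              _ = ⟪η', (q : H →L[ℂ] H) (((D p : ↥M) : H →L[ℂ] H) ((q : H →L[ℂ] H) η'))⟫_ℂ :=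
                  hmov _ _
              _ = ⟪η', ((q * D p * q : ↥M) : H →L[ℂ] H) η'⟫_ℂ := rfl
              _ = 0 := by rw [hDz]; simp
          have hTform : ⟪η', ((T p : ↥M) : H →L[ℂ] H) η'⟫_ℂ = 0 := by
            simpa using hφ.trans hDform
          have hscale : η = (‖η‖ : ℂ) • η' := by
            rw [hη'def, hc, smul_smul, mul_inv_cancel₀ hnη, one_smul]
          rw [hscale, map_smul, inner_smul_left, inner_smul_right, ← inner_conj_symm,
            hTform]
          simp
      calc ⟪((q * T p * q : ↥M) : H →L[ℂ] H) ξ, ξ⟫_ℂ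
          = ⟪(q : H →L[ℂ] H) (((T p : ↥M) : H →L[ℂ] H) η), ξ⟫_ℂ := by rw [happ]
        _ = ⟪((T p : ↥M) : H →L[ℂ] H) η, (q : H →L[ℂ] H) ξ⟫_ℂ := hmov _ _
        _ = 0 := hmain
    have := (inner_map_self_eq_zero
      (((q * T p * q : ↥M) : H →L[ℂ] H) : H →ₗ[ℂ] H)).mp hform
    ext ξ
    exact congrFun (congrArg DFunLike.coe this) ξ
  exact Subtype.ext hz

set_option maxHeartbeats 1000000 in
/-- For a weak*-local derivation `T` and a projection `p`,
`T p = p (T p) (1-p) + (1-p) (T p) p`. -/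
theorem weakStarLocalDerivation_proj (M : VonNeumannAlgebra H) (T : ↥M → ↥M)
    (hT : IsWeakStarLocalDerivation M T) (p : ↥M) (hp1 : star p = p) (hp2 : p * p = p) :
    T p = p * T p * (1 - p) + (1 - p) * T p * p := by
  -- derivations satisfy p D(p) p = 0 and (1-p) D(p) (1-p) = 0
  have hder : ∀ D : ↥M → ↥M, IsDerivationOn M D →
      p * D p * p = 0 ∧ (1 - p) * D p * (1 - p) = 0 := by
    intro D hD
    have h := hD.2 p p
    rw [hp2] at h
    have hp2' : ∀ x : ↥M, p * (p * x) = p * x := fun x => by rw [← mul_assoc, hp2]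
    have h0 : p * D p * p = 0 := by
      have e : p * D p * p = p * D p * p + p * D p * p := by
        conv_lhs => rw [h]
        simp only [mul_add, add_mul, mul_assoc, hp2, hp2']
      exact (left_eq_add.mp e)
    refine ⟨h0, ?_⟩
    have e2 : (1 - p) * D p * (1 - p) = (D p - (D p * p + p * D p)) + p * D p * p := by
      rw [sub_mul, one_mul, mul_sub, mul_one, sub_mul]
      abel
    rw [e2, sub_eq_zero_of_eq h, h0, add_zero]
  have h0T : p * T p * p = 0 :=
    compression_zero M T hT p p hp1 hp2 fun D hD => (hder D hD).1
  have hq1 : star (1 - p : ↥M) = 1 - p := by rw [star_sub, star_one, hp1]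
  have hq2 : (1 - p : ↥M) * (1 - p) = 1 - p := by
    rw [sub_mul, one_mul, mul_sub, mul_one, hp2, sub_self, sub_zero]
  have h1T : (1 - p) * T p * (1 - p) = 0 :=
    compression_zero M T hT p (1 - p) hq1 hq2 fun D hD => (hder D hD).2
  have expand : T p = p * T p * p + p * T p * (1 - p)
      + ((1 - p) * T p * p + (1 - p) * T p * (1 - p)) := by
    simp only [sub_mul, mul_sub, one_mul, mul_one]
    abel
  conv_lhs => rw [expand]
  rw [h0T, h1T]
  abel
end

section
/- If T : M → M is a weak*-local derivation on a von Neumann algebra M and a ∈ M is self-adjoint with range (support) projection r(a), then (1 − r(a)) T(a) (1 − r(a)) = 0. -/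
open scoped ComplexOrder InnerProductSpace

variable {H : Type*} [NormedAddCommGroup H] [InnerProductSpace ℂ H] [CompleteSpace H]

/-- The range (support) projection of a self-adjoint element `a`: the smallest projection `r`
with `a r = r a = a`. -/
def IsRangeProjectionOf (M : VonNeumannAlgebra H) (r a : ↥M) : Prop :=
  star r = r ∧ r * r = r ∧ a * r = a ∧ r * a = a ∧
    ∀ q : ↥M, star q = q → q * q = q → a * q = a → q * a = a → r * q = r

/-- For a weak*-local derivation `T` and self-adjoint `a` with range projection `r`,
`(1 - r) T(a) (1 - r) = 0`. -/
theorem weakStarLocalDerivation_range_proj (M : VonNeumannAlgebra H) (T : ↥M → ↥M)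
    (hT : IsWeakStarLocalDerivation M T) (a r : ↥M) (ha : star a = a)
    (hr : IsRangeProjectionOf M r a) : (1 - r) * T a * (1 - r) = 0 := by
  obtain ⟨hrs, hrr, har, hra, -⟩ := hr
  set p : ↥M := 1 - r with hpdef
  have hps : star p = p := by rw [hpdef, star_sub, star_one, hrs]
  have hpp : p * p = p := by
    rw [hpdef, sub_mul, one_mul, mul_sub, mul_one, hrr, sub_self, sub_zero]
  have hrp : r * p = 0 := by rw [hpdef, mul_sub, mul_one, hrr, sub_self]
  have hpa : p * a = 0 := by rw [hpdef, sub_mul, one_mul, hra, sub_self]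
  -- Every derivation `D` satisfies `p * D a * p = 0`.
  have key : ∀ D : ↥M → ↥M, (∀ x y : ↥M, D (x * y) = D x * y + x * D y) →
      p * D a * p = 0 := by
    intro D hD
    have h1 : D a = D a * r + a * D r := by conv_lhs => rw [← har, hD a r]
    calc p * D a * p = p * (D a * r) * p + p * (a * D r) * p := by
          conv_lhs => rw [h1, mul_add, add_mul]
      _ = p * D a * (r * p) + (p * a) * (D r * p) := by simp only [mul_assoc]
      _ = 0 := by rw [hrp, hpa]; simp
  -- Reduce to an operator identity in `B(H)`.
  apply Subtype.ext
  have hmain : ((↑(p * T a * p) : H →L[ℂ] H) : H →ₗ[ℂ] H) = 0 := by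
    rw [← inner_map_self_eq_zero]
    intro ξ
    have hstarp : star (↑p : H →L[ℂ] H) = ↑p := by
      rw [show star (↑p : H →L[ℂ] H) = ↑(star p) from rfl, hps]
    have hmove : ∀ x y : H, ⟪(↑p : H →L[ℂ] H) x, y⟫_ℂ = ⟪x, (↑p : H →L[ℂ] H) y⟫_ℂ := by
      intro x y
      rw [← hstarp, ContinuousLinearMap.star_eq_adjoint, ContinuousLinearMap.adjoint_inner_left,
        ← ContinuousLinearMap.star_eq_adjoint, hstarp]
    set η : H := (↑p : H →L[ℂ] H) ξ with hη
    have hbx : ((↑(p * T a * p) : H →L[ℂ] H) : H →ₗ[ℂ] H) ξ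
        = (↑p : H →L[ℂ] H) ((↑(T a) : H →L[ℂ] H) η) := by
      simp only [ContinuousLinearMap.coe_coe, MulMemClass.coe_mul,
        ContinuousLinearMap.mul_apply, hη]
    rw [hbx, hmove, ← hη]
    -- goal : ⟪(T a) η, η⟫ = 0
    by_cases hη0 : η = 0
    · rw [hη0]; simp
    · have hnpos : (0 : ℝ) < ‖η‖ := norm_pos_iff.mpr hη0
      have hc : ((‖η‖ : ℝ) : ℂ) ≠ 0 := by exact_mod_cast hnpos.ne'
      set u : H := ((‖η‖ : ℂ))⁻¹ • η with hu
      have hnu : ‖u‖ = 1 := by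
        rw [hu, norm_smul]
        simp [norm_inv, hnpos.ne']
      have hη_eq : η = ((‖η‖ : ℝ) : ℂ) • u := by
        rw [hu, smul_smul, mul_inv_cancel₀ hc, one_smul]
      set φ : (H →L[ℂ] H) → ℂ := fun x => ⟪u, x u⟫_ℂ with hφ
      have hφn : IsNormalState φ := by
        refine ⟨fun n => if n = 0 then u else 0, ?_, ?_⟩
        · have he : (fun n : ℕ => ‖if n = 0 then u else 0‖ ^ 2)
              = fun n : ℕ => if n = 0 then (1 : ℝ) else 0 := by
            funext n; by_cases h : n = 0 <;> simp [h, hnu]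
          rw [he, tsum_ite_eq]
        · intro x
          have he : (fun n : ℕ => ⟪(if n = 0 then u else 0), x (if n = 0 then u else 0)⟫_ℂ)
              = fun n : ℕ => if n = 0 then ⟪u, x u⟫_ℂ else 0 := by
            funext n; by_cases h : n = 0 <;> simp [h]
          rw [hφ, he, tsum_ite_eq]
      obtain ⟨D, ⟨-, hDder⟩, hTD⟩ := hT.2 a φ hφn
      have hpη : (↑p : H →L[ℂ] H) η = η := by
        rw [hη, show (↑p : H →L[ℂ] H) ((↑p : H →L[ℂ] H) ξ) = (↑(p * p) : H →L[ℂ] H) ξ by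
          simp [MulMemClass.coe_mul], hpp]
      have hDzero : ⟪η, (↑(D a) : H →L[ℂ] H) η⟫_ℂ = 0 := by
        have e : (↑(p * D a * p) : H →L[ℂ] H) η
            = (↑p : H →L[ℂ] H) ((↑(D a) : H →L[ℂ] H) ((↑p : H →L[ℂ] H) η)) := by
          simp [MulMemClass.coe_mul]
        have e2 : ⟪η, (↑(D a) : H →L[ℂ] H) η⟫_ℂ
            = ⟪η, (↑(p * D a * p) : H →L[ℂ] H) η⟫_ℂ := by
          rw [e, ← hmove, hpη]
        rw [e2, key D hDder]
        simp
      have hDu : ⟪u, (↑(D a) : H →L[ℂ] H) u⟫_ℂ = 0 := by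
        have h := hDzero
        rw [hη_eq, map_smul, inner_smul_left, inner_smul_right, Complex.conj_ofReal] at h
        simpa [hc] using h
      have hTu : ⟪u, (↑(T a) : H →L[ℂ] H) u⟫_ℂ = 0 := by
        simp only [hφ] at hTD
        rw [hTD, hDu]
      have hTzero : ⟪η, (↑(T a) : H →L[ℂ] H) η⟫_ℂ = 0 := by
        rw [hη_eq, map_smul, inner_smul_left, inner_smul_right, hTu]
        simp
      exact inner_eq_zero_symm.mpr hTzero
  have h0 : (↑(p * T a * p) : H →L[ℂ] H) = 0 :=
    ContinuousLinearMap.coe_injective (by rw [hmain]; rfl)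
  simpa using h0
end

section
/- Every strong-local *-automorphism on a von Neumann algebra is a unital Jordan *-homomorphism. In particular, if T : M → M is linear and for every a ∈ M and every normal state φ there exists a *-automorphism π_{a,φ} of M with φ((T(a) − π_{a,φ}(a))* (T(a) − π_{a,φ}(a))) = 0, then T(u) is unitary for every unitary u ∈ M, T maps projections to projections, T(a*) = T(a)*, and T(a²) = T(a)² for all a ∈ M. -/
open scoped ComplexOrder InnerProductSpace


variable {H : Type*} [NormedAddCommGroup H] [InnerProductSpace ℂ H] [CompleteSpace H]

/-- A strong-local `*`-automorphism on the von Neumann algebra `M`: a linear map agreeing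
with some `*`-automorphism at each point, up to the seminorm `|||x|||_φ = φ(x*x)^{1/2}` of each
normal state `φ`. -/
def IsStrongLocalStarAut (M : VonNeumannAlgebra H) (T : ↥M → ↥M) : Prop :=
  IsLinearMap ℂ T ∧ ∀ (a : ↥M) (φ : (H →L[ℂ] H) → ℂ), IsNormalState φ →
    ∃ π : ↥M ≃⋆ₐ[ℂ] ↥M, φ ↑(star (T a - π a) * (T a - π a)) = 0

/-!
Testing the defining condition against the vector state of `ξ / ‖ξ‖` shows that for every `a`
and every vector `ξ` there is a `*`-automorphism `π` with `T a ξ = π a ξ`. Hence `T` is unital,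
contractive, maps isometries to isometries, and maps self-adjoint elements to self-adjoint ones
(their quadratic forms are real), so it preserves `*`. For skew-adjoint `b` the function
`t ↦ T (exp (-t b)) * T (exp (t b))` is then constantly `1`; its second derivative at `0` is
`2 (T (b * b) - T b * T b)`. This gives `T (x * x) = T x * T x` for self-adjoint `x = -i b`, and
polarization extends it to all of `M`.
-/

open scoped ComplexStarModule
open NormedSpace Complex

theorem LinearMap.map_star_of_forall_isSelfAdjoint {A B : Type*} [AddCommGroup A] [Module ℂ A]
    [StarAddMonoid A] [StarModule ℂ A] [AddCommGroup B] [Module ℂ B] [StarAddMonoid B]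
    [StarModule ℂ B] (f : A →ₗ[ℂ] B) (hf : ∀ x, IsSelfAdjoint x → IsSelfAdjoint (f x)) (a : A) :
    f (star a) = star (f a) := by
  rw [← realPart_add_I_smul_imaginaryPart a]
  simp [(hf _ (ℜ a).2).star_eq, (hf _ (ℑ a).2).star_eq]

theorem add_I_smul_mul_self {R : Type*} [Ring R] [Module ℂ R] [IsScalarTower ℂ R R]
    [SMulCommClass ℂ R R] (p q : R) :
    (p + I • q) * (p + I • q) = p * p - q * q + I • (p * q + q * p) := by
  simp only [add_mul, mul_add, smul_mul_assoc, mul_smul_comm, smul_smul, I_mul_I, neg_one_smul,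
    smul_add]
  abel

theorem LinearMap.map_mul_self_of_forall_isSelfAdjoint {A B : Type*} [Ring A] [StarRing A]
    [Module ℂ A] [StarModule ℂ A] [IsScalarTower ℂ A A] [SMulCommClass ℂ A A] [Ring B]
    [Module ℂ B] [IsScalarTower ℂ B B] [SMulCommClass ℂ B B] (f : A →ₗ[ℂ] B)
    (hf : ∀ x, IsSelfAdjoint x → f (x * x) = f x * f x) (a : A) :
    f (a * a) = f a * f a := by
  rw [← realPart_add_I_smul_imaginaryPart a]
  obtain ⟨x, hx⟩ := ℜ a
  obtain ⟨y, hy⟩ := ℑ a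
  have hxy : f (x * y + y * x) = f x * f y + f y * f x := by
    have := hf _ (hx.add hy)
    simp only [add_mul, mul_add, map_add, hf x hx, hf y hy] at this
    rw [map_add, ← sub_eq_zero]
    convert sub_eq_zero.mpr this using 1
    abel
  rw [add_I_smul_mul_self, map_add, map_sub, map_smul, hf x hx, hf y hy, hxy, map_add, map_smul,
    add_I_smul_mul_self]

/-- The second derivative at `0` of `t ↦ f (exp (-t b)) * f (exp (t b))` is
`2 (f (b * b) - f b * f b)`. -/
theorem ContinuousLinearMap.map_mul_self_of_map_exp_neg_mul_map_exp {A B : Type*} [NormedRing A]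
    [NormedAlgebra ℝ A] [CompleteSpace A] [NormedRing B] [NormedAlgebra ℝ B] (f : A →L[ℝ] B)
    (hf : f 1 = 1) (b : A) (h : ∀ t : ℝ, f (exp (t • -b)) * f (exp (t • b)) = 1) :
    f (b * b) = f b * f b := by
  have hderiv (c : A) (t : ℝ) :
      HasDerivAt (fun s : ℝ => f (exp (s • c))) (f (exp (t • c) * c)) t :=
    f.hasFDerivAt.comp_hasDerivAt t (hasDerivAt_exp_smul_const c t)
  have hderiv₂ (c : A) (t : ℝ) :
      HasDerivAt (fun s : ℝ => f (exp (s • c) * c)) (f (exp (t • c) * c * c)) t :=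
    f.hasFDerivAt.comp_hasDerivAt t ((hasDerivAt_exp_smul_const c t).mul_const c)
  have hprod : (fun s : ℝ => f (exp (s • -b)) * f (exp (s • b))) = fun _ => 1 := funext h
  have hF : (fun s : ℝ => f (exp (s • -b) * -b) * f (exp (s • b))
      + f (exp (s • -b)) * f (exp (s • b) * b)) = fun _ => 0 := by
    funext t
    have hG : HasDerivAt (fun s : ℝ => f (exp (s • -b)) * f (exp (s • b))) _ t :=
      (hderiv (-b) t).mul (hderiv b t)
    rw [hprod] at hG
    exact hG.unique (hasDerivAt_const t 1)
  have h₂ : HasDerivAt (fun s : ℝ => f (exp (s • -b) * -b) * f (exp (s • b))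
      + f (exp (s • -b)) * f (exp (s • b) * b)) _ 0 :=
    ((hderiv₂ (-b) 0).mul (hderiv b 0)).add ((hderiv (-b) 0).mul (hderiv₂ b 0))
  rw [hF] at h₂
  have := h₂.unique (hasDerivAt_const 0 0)
  simp only [zero_smul, NormedSpace.exp_zero, one_mul, mul_one, hf, mul_neg, neg_mul, neg_neg,
    map_neg] at this
  have h2 : (2 : ℝ) • (f (b * b) - f b * f b) = 0 := by
    rw [two_smul, ← this]; abel
  exact sub_eq_zero.mp ((smul_eq_zero.mp h2).resolve_left two_ne_zero)

namespace VonNeumannAlgebra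

variable (M : VonNeumannAlgebra H)

instance : CStarRing M := StarSubalgebra.to_cstarRing M.toStarSubalgebra

instance : CompleteSpace M :=
  (show IsClosed (M : Set (H →L[ℂ] H)) from
    M.centralizer_centralizer ▸ Set.isClosed_centralizer _).completeSpace_coe

noncomputable instance : CStarAlgebra M where

end VonNeumannAlgebra

theorem isNormalState_inner_apply_self {E : Type*} [NormedAddCommGroup E] [InnerProductSpace ℂ E]
    {ζ : E} (hζ : ‖ζ‖ = 1) :
    IsNormalState fun x : E →L[ℂ] E => ⟪ζ, x ζ⟫_ℂ := by
  refine ⟨Pi.single 0 ζ, ?_, fun x => ?_⟩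
  · rw [tsum_eq_single 0 fun n hn => by simp [hn]]
    simp [hζ]
  · rw [tsum_eq_single 0 fun n hn => by simp [hn]]
    simp

namespace IsStrongLocalStarAut

variable {M : VonNeumannAlgebra H} {T : M → M}

theorem exists_apply_eq (hT : IsStrongLocalStarAut M T) (a : M) (ξ : H) :
    ∃ π : M ≃⋆ₐ[ℂ] M, (T a : H →L[ℂ] H) ξ = (π a : H →L[ℂ] H) ξ := by
  rcases eq_or_ne ξ 0 with rfl | hξ
  · exact ⟨StarAlgEquiv.refl ℂ M, by simp⟩
  have hζ : ‖(‖ξ‖⁻¹ : ℂ) • ξ‖ = 1 := by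
    simp [norm_smul, inv_mul_cancel₀ (norm_ne_zero_iff.mpr hξ)]
  obtain ⟨π, hπ⟩ := hT.2 a _ (isNormalState_inner_apply_self hζ)
  refine ⟨π, sub_eq_zero.mp ?_⟩
  set Y : H →L[ℂ] H := ((T a - π a : M) : H →L[ℂ] H)
  have hY : ⟪Y ((‖ξ‖⁻¹ : ℂ) • ξ), Y ((‖ξ‖⁻¹ : ℂ) • ξ)⟫_ℂ = 0 := by
    rw [← ContinuousLinearMap.adjoint_inner_right, ← ContinuousLinearMap.star_eq_adjoint]
    exact hπ
  simpa [Y, hξ] using hY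

noncomputable def toLinearMap (hT : IsStrongLocalStarAut M T) : M →ₗ[ℂ] M :=
  IsLinearMap.mk' T hT.1

theorem map_one (hT : IsStrongLocalStarAut M T) : T 1 = 1 :=
  Subtype.ext <| ContinuousLinearMap.ext fun ξ => by
    obtain ⟨π, hπ⟩ := hT.exists_apply_eq 1 ξ
    simpa using hπ

theorem isSelfAdjoint_apply (hT : IsStrongLocalStarAut M T) {a : M} (ha : IsSelfAdjoint a) :
    IsSelfAdjoint (T a) := by
  suffices IsSelfAdjoint (T a : H →L[ℂ] H) from Subtype.ext this
  rw [ContinuousLinearMap.isSelfAdjoint_iff_isSymmetric,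
    LinearMap.isSymmetric_iff_inner_map_self_real]
  intro ξ
  obtain ⟨π, hπ⟩ := hT.exists_apply_eq a ξ
  have hπa : IsSelfAdjoint (π a : H →L[ℂ] H) := congrArg Subtype.val (ha.map π)
  simp only [ContinuousLinearMap.coe_coe, hπ]
  exact (ContinuousLinearMap.isSelfAdjoint_iff_isSymmetric.mp hπa).conj_inner_sym ξ ξ

theorem map_star (hT : IsStrongLocalStarAut M T) (a : M) : T (star a) = star (T a) :=
  hT.toLinearMap.map_star_of_forall_isSelfAdjoint (fun _ => hT.isSelfAdjoint_apply) a

theorem star_mul_self_eq_one (hT : IsStrongLocalStarAut M T) {u : M} (hu : star u * u = 1) :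
    star (T u) * T u = 1 := by
  suffices (T u : H →L[ℂ] H).adjoint ∘L (T u : H →L[ℂ] H) = 1 from Subtype.ext this
  refine (ContinuousLinearMap.norm_map_iff_adjoint_comp_self _).mp fun ξ => ?_
  obtain ⟨π, hπ⟩ := hT.exists_apply_eq u ξ
  have hπu : star (π u : H →L[ℂ] H) * (π u : H →L[ℂ] H) = 1 :=
    congrArg Subtype.val <| show star (π u) * π u = 1 by
      rw [← StarHomClass.map_star, ← map_mul, hu, _root_.map_one]
  rw [hπ]
  exact (ContinuousLinearMap.norm_map_iff_adjoint_comp_self _).mpr hπu ξ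

theorem mul_star_self_eq_one (hT : IsStrongLocalStarAut M T) {u : M} (hu : u * star u = 1) :
    T u * star (T u) = 1 := by
  simpa [hT.map_star] using hT.star_mul_self_eq_one (u := star u) (by simpa using hu)

theorem norm_apply_le (hT : IsStrongLocalStarAut M T) (a : M) : ‖T a‖ ≤ ‖a‖ :=
  ContinuousLinearMap.opNorm_le_bound _ (norm_nonneg a) fun ξ => by
    obtain ⟨π, hπ⟩ := hT.exists_apply_eq a ξ
    calc ‖(T a : H →L[ℂ] H) ξ‖ = ‖(π a : H →L[ℂ] H) ξ‖ := by rw [hπ]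
      _ ≤ ‖π a‖ * ‖ξ‖ := (π a : H →L[ℂ] H).le_opNorm ξ
      _ = ‖a‖ * ‖ξ‖ := by rw [StarAlgEquiv.norm_map]

noncomputable def toContinuousLinearMap (hT : IsStrongLocalStarAut M T) : M →L[ℂ] M :=
  hT.toLinearMap.mkContinuous 1 fun a => by rw [one_mul]; exact hT.norm_apply_le a

theorem map_mul_self_of_isSelfAdjoint (hT : IsStrongLocalStarAut M T) {x : M}
    (hx : IsSelfAdjoint x) : T (x * x) = T x * T x := by
  set b := I • x
  have hb : star b = -b := by simp [b, hx.star_eq]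
  have hunitary (t : ℝ) : T (exp (t • -b)) * T (exp (t • b)) = 1 := by
    have hskew : t • b ∈ skewAdjoint M := by
      rw [skewAdjoint.mem_iff, star_smul, hb, star_trivial, smul_neg]
    have hstar : star (exp (t • b)) = exp (t • -b) := by
      rw [star_exp, skewAdjoint.mem_iff.mp hskew, smul_neg]
    -- The algebraic laws of `exp` are stated for `ℚ`-algebras.
    let : NormedAlgebra ℚ M := .restrictScalars ℚ ℂ M
    rw [← hstar, hT.map_star]
    exact hT.star_mul_self_eq_one (exp_mem_unitary_of_mem_skewAdjoint hskew).1
  have hb₂ : T (b * b) = T b * T b :=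
    (hT.toContinuousLinearMap.restrictScalars ℝ).map_mul_self_of_map_exp_neg_mul_map_exp
      hT.map_one b hunitary
  simpa [b, hT.1.map_smul, hT.1.map_neg] using hb₂

theorem map_mul_self (hT : IsStrongLocalStarAut M T) (a : M) : T (a * a) = T a * T a :=
  hT.toLinearMap.map_mul_self_of_forall_isSelfAdjoint
    (fun _ => hT.map_mul_self_of_isSelfAdjoint) a

end IsStrongLocalStarAut

/-- Every strong-local `*`-automorphism on a von Neumann algebra is a unital Jordan
`*`-homomorphism; in particular it sends unitaries to unitaries and projections to
projections. -/
theorem strongLocalStarAut_jordan (M : VonNeumannAlgebra H) (T : ↥M → ↥M)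
    (hT : IsStrongLocalStarAut M T) :
    T 1 = 1 ∧ (∀ a : ↥M, T (star a) = star (T a)) ∧
      (∀ a : ↥M, T (a * a) = T a * T a) ∧
      (∀ u : ↥M, u * star u = 1 → star u * u = 1 →
        T u * star (T u) = 1 ∧ star (T u) * T u = 1) ∧
      (∀ p : ↥M, star p = p → p * p = p → star (T p) = T p ∧ T p * T p = T p) :=
  ⟨hT.map_one, hT.map_star, hT.map_mul_self,
    fun _ hu₁ hu₂ => ⟨hT.mul_star_self_eq_one hu₁, hT.star_mul_self_eq_one hu₂⟩,
    fun p hp₁ hp₂ => ⟨by rw [← hT.map_star, hp₁], by rw [← hT.map_mul_self, hp₂]⟩⟩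
end
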